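/- (Bayesian Cramér–Rao inequality) Let X be a finite set, Θ ⊆ ℝ^k open, θ ↦ p_θ a continuously differentiable family of strictly positive probability distributions on X, and λ a continuously differentiable, strictly positive probability density on Θ. Define the Fisher matrix G^{(e)}(θ) with entries E_{p_θ}[∂_i log p_θ(X) ∂_j log p_θ(X)] and J^λ(θ) with entries ∂_i log λ(θ) · ∂_j log λ(θ). Let θ̂ : X → ℝ^k be an unbiased estimator, i.e. E_{p_θ}[θ̂] = θ for all θ ∈ Θ. Assume G^{(e)}(θ) + J^λ(θ) is positive definite for all θ and that all the matrix-valued integrals below exist (entrywise Lebesgue integrals over Θ). Then ∫_Θ λ(θ) Cov_{p_θ}[θ̂] dθ ≽ ( ∫_Θ λ(θ) [G^{(e)}(θ) + J^λ(θ)] dθ )^{-1}. -/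

import Mathlib

open scoped BigOperators Topology Matrix
open Real MeasureTheory

noncomputable section

/-- Expectation of `A` under the weight/distribution `p` on a finite set. -/
def expct {X : Type*} [Fintype X] (p A : X → ℝ) : ℝ := ∑ x, p x * A x

/-- Covariance of `A` and `B` under `p`. -/
def covf {X : Type*} [Fintype X] (p A B : X → ℝ) : ℝ :=
  (∑ x, p x * A x * B x) - (∑ x, p x * A x) * (∑ x, p x * B x)

/-- Variance of `A` under `p`: `E_p[(A - E_p A)^2]`. -/
def varE {X : Type*} [Fintype X] (p A : X → ℝ) : ℝ :=
  ∑ x, p x * (A x - expct p A) ^ 2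

/-- The α-escort distribution of `p`. -/
def escort {X : Type*} [Fintype X] (α : ℝ) (p : X → ℝ) : X → ℝ :=
  fun x => p x ^ α / ∑ y, p y ^ α

/-- Partial derivative in the `i`-th coordinate direction. -/
def pderiv {m : ℕ} (i : Fin m) (f : (Fin m → ℝ) → ℝ) (θ : Fin m → ℝ) : ℝ :=
  fderiv ℝ f θ (Pi.single i 1)

/-- Covariance matrix of a vector-valued map `A` under `p`. -/
def covMatrix {X : Type*} [Fintype X] {m : ℕ} (p : X → ℝ) (A : X → Fin m → ℝ) :
    Matrix (Fin m) (Fin m) ℝ :=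
  Matrix.of fun i j => covf p (fun x => A x i) (fun x => A x j)

/-- The α-information matrix `G^{(α)}(θ)`. -/
def Galpha {X : Type*} [Fintype X] {m : ℕ} (α : ℝ) (p : (Fin m → ℝ) → X → ℝ)
    (θ : Fin m → ℝ) : Matrix (Fin m) (Fin m) ℝ :=
  Matrix.of fun i j =>
    covf (escort α (p θ)) (fun x => pderiv i (fun t => Real.log (p t x)) θ)
      (fun x => pderiv j (fun t => Real.log (p t x)) θ)

/-- The I_α-divergence (relative α-entropy). -/
def Ialpha {X : Type*} [Fintype X] (α : ℝ) (p q : X → ℝ) : ℝ :=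
  (1 / (1 - α)) * Real.log (∑ x, p x * q x ^ (α - 1))
    + (1 / α) * Real.log (∑ x, q x ^ α)
    - (1 / (α * (1 - α))) * Real.log (∑ x, p x ^ α)

/-- Generalized KL-divergence between positive measures on a finite set. -/
def genKL {X : Type*} [Fintype X] (pt qt : X → ℝ) : ℝ :=
  ∑ x, pt x * Real.log (pt x / qt x) - ∑ x, pt x + ∑ x, qt x

/-- The Fisher information matrix `G^{(e)}(θ)`. -/
def GeMat {X : Type*} [Fintype X] {k : ℕ} (p : (Fin k → ℝ) → X → ℝ) (θ : Fin k → ℝ) :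
    Matrix (Fin k) (Fin k) ℝ :=
  Matrix.of fun i j =>
    ∑ x, p θ x * pderiv i (fun t => Real.log (p t x)) θ * pderiv j (fun t => Real.log (p t x)) θ

/-- The prior matrix `J^λ(θ)` with entries `∂_i log λ · ∂_j log λ`. -/
def Jmat {k : ℕ} (lam : (Fin k → ℝ) → ℝ) (θ : Fin k → ℝ) : Matrix (Fin k) (Fin k) ℝ :=
  Matrix.of fun i j =>
    pderiv i (fun t => Real.log (lam t)) θ * pderiv j (fun t => Real.log (lam t)) θ

/-- The generalized Fisher matrix `G^{(f,F)}(θ)` of the escort model. -/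
def GFF {X : Type*} [Fintype X] {k : ℕ} (F : ℝ → ℝ) (p : (Fin k → ℝ) → X → ℝ)
    (θ : Fin k → ℝ) : Matrix (Fin k) (Fin k) ℝ :=
  Matrix.of fun i j =>
    ∑ x, F (p θ x) * pderiv i (fun t => Real.log (F (p t x))) θ
      * pderiv j (fun t => Real.log (F (p t x))) θ

/-- The generalized f-divergence `D_f^{(F)}(p,q)`. -/
def genDiv {X : Type*} [Fintype X] (f F : ℝ → ℝ) (p q : X → ℝ) : ℝ :=
  (1 / deriv (deriv f) 1) * ∑ x, F (q x) * f (F (p x) / F (q x))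

/-- The Bayesian I_α-divergence between `λ·p` and `μ·q`. -/
def IalphaB {X : Type*} [Fintype X] (α lam mu : ℝ) (p q : X → ℝ) : ℝ :=
  lam * Ialpha α p q + lam * Real.log (lam / mu) - lam + mu

/-- The open-simplex parametrization of distributions on a set with `d+1` points. -/
def simplexFam (d : ℕ) (θ : Fin d → ℝ) : Fin (d + 1) → ℝ :=
  fun x => if h : (x : ℕ) < d then θ ⟨x, h⟩ else 1 - ∑ i, θ i

/-!
At each `θ`, the centred estimator `u = θ̂ - θ` and the Bayesian score
`s = ∇ log p_θ + ∇ log λ` satisfy `E_{p_θ}[u sᵀ] = 1`: differentiating `E_{p_θ}[θ̂] = θ` gives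
`E_{p_θ}[θ̂ (∇ log p_θ)ᵀ] = 1`, and the prior term drops out because `E_{p_θ}[u] = 0`.
Expanding `0 ≤ E_{p_θ}[(a ⬝ u - s ⬝ c)²]` therefore gives
`2 a ⬝ c ≤ aᵀ Cov_{p_θ}[θ̂] a + cᵀ (G^{(e)} + J^λ) c`, and integrating against `λ` gives
`2 a ⬝ c ≤ aᵀ V a + cᵀ B c` for the two integrated matrices `V`, `B`.
The choice `c = B⁻¹ a` turns this into `aᵀ (V - B⁻¹) a ≥ 0`.
-/

open Matrix

section Moments

variable {X : Type*} [Fintype X] {n : Type*} {R : Type*} [CommRing R]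

def momentMatrix (q : X → R) (u v : X → n → R) : Matrix n n R :=
  of fun i j => ∑ x, q x * u x i * v x j

theorem momentMatrix_add_const (q : X → R) (u v : X → n → R) (a b : n → R) :
    momentMatrix q (fun x => u x + a) (fun x => v x + b)
      = momentMatrix q u v + vecMulVec (∑ x, q x • u x) b + vecMulVec a (∑ x, q x • v x)
        + (∑ x, q x) • vecMulVec a b := by
  ext i j
  simp only [momentMatrix, Matrix.add_apply, Matrix.smul_apply, of_apply, vecMulVec_apply,
    Pi.add_apply, Finset.sum_apply, Pi.smul_apply, smul_eq_mul, Finset.sum_mul, Finset.mul_sum,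
    ← Finset.sum_add_distrib]
  exact Finset.sum_congr rfl fun x _ => by ring

theorem covMatrix_eq_momentMatrix_sub {m : ℕ} (q : X → ℝ) (A : X → Fin m → ℝ) :
    covMatrix q A = momentMatrix q A A - vecMulVec (∑ x, q x • A x) (∑ x, q x • A x) := by
  ext i j
  simp [covMatrix, covf, momentMatrix, vecMulVec_apply, Finset.sum_apply]

variable [Fintype n]

theorem dotProduct_momentMatrix_mulVec (q : X → R) (u v : X → n → R) (a b : n → R) :
    a ⬝ᵥ momentMatrix q u v *ᵥ b = ∑ x, q x * (a ⬝ᵥ u x) * (v x ⬝ᵥ b) := by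
  simp only [momentMatrix, dotProduct, mulVec, of_apply, Finset.mul_sum, Finset.sum_mul]
  conv_lhs => enter [2, i]; rw [Finset.sum_comm]
  rw [Finset.sum_comm]
  refine Finset.sum_congr rfl fun x _ => ?_
  rw [Finset.sum_comm]
  exact Finset.sum_congr rfl fun j _ => Finset.sum_congr rfl fun i _ => by ring

theorem two_mul_dotProduct_le_of_momentMatrix_eq_one [DecidableEq n] {q : X → ℝ}
    (hq : ∀ x, 0 ≤ q x) {u v : X → n → ℝ} (h : momentMatrix q u v = 1) (a c : n → ℝ) :
    2 * (a ⬝ᵥ c) ≤ a ⬝ᵥ momentMatrix q u u *ᵥ a + c ⬝ᵥ momentMatrix q v v *ᵥ c := by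
  have hac : a ⬝ᵥ c = ∑ x, q x * (a ⬝ᵥ u x) * (v x ⬝ᵥ c) := by
    rw [← dotProduct_momentMatrix_mulVec, h, one_mulVec]
  have hsq : 0 ≤ ∑ x, q x * (a ⬝ᵥ u x - v x ⬝ᵥ c) ^ 2 :=
    Finset.sum_nonneg fun x _ => mul_nonneg (hq x) (sq_nonneg _)
  calc 2 * (a ⬝ᵥ c) ≤ 2 * (a ⬝ᵥ c) + ∑ x, q x * (a ⬝ᵥ u x - v x ⬝ᵥ c) ^ 2 :=
        le_add_of_nonneg_right hsq
    _ = a ⬝ᵥ momentMatrix q u u *ᵥ a + c ⬝ᵥ momentMatrix q v v *ᵥ c := by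
        rw [hac, dotProduct_momentMatrix_mulVec, dotProduct_momentMatrix_mulVec, Finset.mul_sum,
          ← Finset.sum_add_distrib, ← Finset.sum_add_distrib]
        refine Finset.sum_congr rfl fun x _ => ?_
        rw [dotProduct_comm (u x) a, dotProduct_comm c (v x)]
        ring

end Moments

theorem posSemidef_sub_inv_of_forall_two_mul_dotProduct_le {n : Type*} [Fintype n]
    [DecidableEq n] {V B : Matrix n n ℝ} (hV : V.IsHermitian) (hB : B.IsHermitian)
    (h : ∀ a c, 2 * (a ⬝ᵥ c) ≤ a ⬝ᵥ V *ᵥ a + c ⬝ᵥ B *ᵥ c) : (V - B⁻¹).PosSemidef := by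
  refine .of_dotProduct_mulVec_nonneg (hV.sub hB.inv) fun a => ?_
  have hBc : B⁻¹ *ᵥ a ⬝ᵥ B *ᵥ (B⁻¹ *ᵥ a) = a ⬝ᵥ B⁻¹ *ᵥ a := by
    by_cases hdet : IsUnit B.det
    · rw [mulVec_mulVec, mul_nonsing_inv _ hdet, one_mulVec, dotProduct_comm]
    · simp [nonsing_inv_apply_not_isUnit _ hdet]
  have := h a (B⁻¹ *ᵥ a)
  rw [star_trivial, sub_mulVec, dotProduct_sub]
  linarith

section Integral

variable {α : Type*} [MeasurableSpace α] {μ : Measure α} {n : Type*}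

theorem integrable_dotProduct_mulVec [Fintype n] {f : α → Matrix n n ℝ}
    (hf : ∀ i j, Integrable (fun x => f x i j) μ) (a b : n → ℝ) :
    Integrable (fun x => a ⬝ᵥ f x *ᵥ b) μ := by
  simp only [dotProduct, mulVec]
  exact integrable_finsetSum _ fun i _ =>
    (integrable_finsetSum _ fun j _ => (hf i j).mul_const _).const_mul _

theorem integral_dotProduct_mulVec [Fintype n] {f : α → Matrix n n ℝ}
    (hf : ∀ i j, Integrable (fun x => f x i j) μ) (a b : n → ℝ) :
    ∫ x, a ⬝ᵥ f x *ᵥ b ∂μ = a ⬝ᵥ (of fun i j => ∫ x, f x i j ∂μ) *ᵥ b := by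
  simp only [dotProduct, mulVec, of_apply]
  rw [integral_finsetSum _ fun i _ =>
    (integrable_finsetSum _ fun j _ => (hf i j).mul_const _).const_mul _]
  refine Finset.sum_congr rfl fun i _ => ?_
  rw [integral_const_mul, integral_finsetSum _ fun j _ => (hf i j).mul_const _]
  simp only [integral_mul_const]

theorem isHermitian_integral {f : α → Matrix n n ℝ} (hf : ∀ x, (f x).IsHermitian) :
    (of fun i j => ∫ x, f x i j ∂μ).IsHermitian :=
  ext fun i j => by
    simp only [conjTranspose_apply, star_trivial, of_apply]
    congr with x
    simpa using (hf x).apply i j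

end Integral

section Symmetry

variable {X : Type*} [Fintype X]

theorem covf_comm (q A B : X → ℝ) : covf q A B = covf q B A := by
  unfold covf
  rw [mul_comm (∑ x, q x * A x)]
  congr 1
  exact Finset.sum_congr rfl fun x _ => mul_right_comm _ _ _

theorem isHermitian_covMatrix {m : ℕ} (q : X → ℝ) (A : X → Fin m → ℝ) :
    (covMatrix q A).IsHermitian :=
  ext fun i j => by simp only [conjTranspose_apply, star_trivial, covMatrix, of_apply, covf_comm]

theorem isHermitian_momentMatrix_self {n : Type*} (q : X → ℝ) (u : X → n → ℝ) :
    (momentMatrix q u u).IsHermitian :=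
  ext fun i j => by
    simp only [conjTranspose_apply, star_trivial, momentMatrix, of_apply]
    exact Finset.sum_congr rfl fun x _ => mul_right_comm _ _ _

end Symmetry

section Score

variable {X : Type*} [Fintype X] {m : ℕ} {p : (Fin m → ℝ) → X → ℝ} {θ : Fin m → ℝ}

def score (p : (Fin m → ℝ) → X → ℝ) (θ : Fin m → ℝ) (x : X) : Fin m → ℝ :=
  fun i => pderiv i (fun t => Real.log (p t x)) θ

theorem GeMat_eq_momentMatrix_score : GeMat p θ = momentMatrix (p θ) (score p θ) (score p θ) :=
  rfl

theorem Jmat_eq_vecMulVec (lam : (Fin m → ℝ) → ℝ) :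
    Jmat lam θ = vecMulVec (fun i => pderiv i (fun t => Real.log (lam t)) θ)
      (fun i => pderiv i (fun t => Real.log (lam t)) θ) :=
  rfl

theorem isHermitian_GeMat_add_Jmat (lam : (Fin m → ℝ) → ℝ) :
    (GeMat p θ + Jmat lam θ).IsHermitian := by
  rw [GeMat_eq_momentMatrix_score, Jmat_eq_vecMulVec]
  refine (isHermitian_momentMatrix_self _ _).add ?_
  rw [IsHermitian, conjTranspose_eq_transpose_of_trivial, transpose_vecMulVec]

theorem sum_mul_mul_score (hp : ∀ x, DifferentiableAt ℝ (fun t => p t x) θ)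
    (hpos : ∀ x, p θ x ≠ 0) (A : X → ℝ) (i : Fin m) :
    ∑ x, p θ x * A x * score p θ x i = pderiv i (fun t => ∑ x, p t x * A x) θ := by
  have hderiv := HasFDerivAt.fun_sum fun x (_ : x ∈ Finset.univ) =>
    (hp x).hasFDerivAt.mul_const (A x)
  simp only [pderiv, score, hderiv.fderiv, ((hp _).hasFDerivAt.log (hpos _)).fderiv,
    _root_.sum_apply, _root_.smul_apply, smul_eq_mul]
  refine Finset.sum_congr rfl fun x _ => ?_
  field_simp [hpos x]

theorem sum_smul_score_eq_zero (hp : ∀ x, DifferentiableAt ℝ (fun t => p t x) θ)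
    (hpos : ∀ x, p θ x ≠ 0) (hsum : ∀ᶠ t in 𝓝 θ, ∑ x, p t x = 1) :
    ∑ x, p θ x • score p θ x = 0 := by
  ext i
  have h := sum_mul_mul_score hp hpos 1 i
  simp only [Pi.one_apply, mul_one] at h
  simp [Finset.sum_apply, h, pderiv, Filter.EventuallyEq.fderiv_eq hsum]

theorem momentMatrix_score_eq_one (hp : ∀ x, DifferentiableAt ℝ (fun t => p t x) θ)
    (hpos : ∀ x, p θ x ≠ 0) {A : X → Fin m → ℝ}
    (hA : ∀ᶠ t in 𝓝 θ, ∀ i, expct (p t) (fun x => A x i) = t i) :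
    momentMatrix (p θ) A (score p θ) = 1 := by
  ext i j
  have hAi : (fun t => ∑ x, p t x * A x i) =ᶠ[𝓝 θ] fun t => t i := hA.mono fun t ht => ht i
  rw [momentMatrix, of_apply, sum_mul_mul_score hp hpos, pderiv, hAi.fderiv_eq,
    (hasFDerivAt_apply i θ).fderiv, ContinuousLinearMap.proj_apply, Pi.single_apply, one_apply]

theorem two_mul_dotProduct_le_covMatrix_add_GeMat_add_Jmat {est : X → Fin m → ℝ}
    (hp : ∀ x, DifferentiableAt ℝ (fun t => p t x) θ) (hpos : ∀ x, 0 < p θ x)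
    (hsum : ∀ᶠ t in 𝓝 θ, ∑ x, p t x = 1)
    (hunb : ∀ᶠ t in 𝓝 θ, ∀ i, expct (p t) (fun x => est x i) = t i)
    (lam : (Fin m → ℝ) → ℝ) (a c : Fin m → ℝ) :
    2 * (a ⬝ᵥ c) ≤ a ⬝ᵥ covMatrix (p θ) est *ᵥ a + c ⬝ᵥ (GeMat p θ + Jmat lam θ) *ᵥ c := by
  set g : Fin m → ℝ := fun i => pderiv i (fun t => Real.log (lam t)) θ
  have hne : ∀ x, p θ x ≠ 0 := fun x => (hpos x).ne'
  have h1 : ∑ x, p θ x = 1 := hsum.self_of_nhds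
  have hmean : ∑ x, p θ x • est x = θ := funext fun i => by
    simpa [Finset.sum_apply, expct] using hunb.self_of_nhds i
  have hscore := sum_smul_score_eq_zero hp hne hsum
  have hcov : covMatrix (p θ) est
      = momentMatrix (p θ) (fun x => est x + -θ) (fun x => est x + -θ) := by
    rw [momentMatrix_add_const, covMatrix_eq_momentMatrix_sub, hmean, h1]
    simp [neg_vecMulVec, vecMulVec_neg]
    abel
  have hfisher : GeMat p θ + Jmat lam θ
      = momentMatrix (p θ) (fun x => score p θ x + g) (fun x => score p θ x + g) := by
    rw [momentMatrix_add_const, hscore, h1, GeMat_eq_momentMatrix_score, Jmat_eq_vecMulVec]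
    simp [g]
  have hcross : momentMatrix (p θ) (fun x => est x + -θ) (fun x => score p θ x + g) = 1 := by
    rw [momentMatrix_add_const, momentMatrix_score_eq_one hp hne hunb, hscore, hmean, h1]
    simp [neg_vecMulVec]
  rw [hcov, hfisher]
  exact two_mul_dotProduct_le_of_momentMatrix_eq_one (fun x => (hpos x).le) hcross a c

end Score

theorem bayesian_cramer_rao_general {X : Type*} [Fintype X] {k : ℕ}
    (Θ : Set (Fin k → ℝ)) (hΘ : IsOpen Θ)
    (p : (Fin k → ℝ) → X → ℝ)
    (hsmooth : ∀ x, ContDiffOn ℝ 1 (fun θ => p θ x) Θ)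
    (hpos : ∀ θ ∈ Θ, ∀ x, 0 < p θ x)
    (hsum : ∀ θ ∈ Θ, ∑ x, p θ x = 1)
    (lam : (Fin k → ℝ) → ℝ)
    (hlampos : ∀ θ ∈ Θ, 0 < lam θ)
    (hlamint : (∫ θ in Θ, lam θ) = 1)
    (est : X → Fin k → ℝ)
    (hunb : ∀ θ ∈ Θ, ∀ i, expct (p θ) (fun x => est x i) = θ i)
    (hint1 : ∀ i j, IntegrableOn (fun θ => lam θ * covMatrix (p θ) est i j) Θ)
    (hint2 : ∀ i j, IntegrableOn (fun θ => lam θ * (GeMat p θ + Jmat lam θ) i j) Θ) :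
    ((Matrix.of fun i j => ∫ θ in Θ, lam θ * covMatrix (p θ) est i j)
      - (Matrix.of fun i j =>
          ∫ θ in Θ, lam θ * (GeMat p θ + Jmat lam θ) i j)⁻¹).PosSemidef := by
  refine posSemidef_sub_inv_of_forall_two_mul_dotProduct_le
    (isHermitian_integral fun θ => (isHermitian_covMatrix _ _).smul (.all (lam θ)))
    (isHermitian_integral fun θ => (isHermitian_GeMat_add_Jmat lam).smul (.all (lam θ)))
    fun a c => ?_
  have hpointwise : ∀ θ ∈ Θ, lam θ * (2 * (a ⬝ᵥ c))
      ≤ a ⬝ᵥ (lam θ • covMatrix (p θ) est) *ᵥ a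
        + c ⬝ᵥ (lam θ • (GeMat p θ + Jmat lam θ)) *ᵥ c := by
    intro θ hθ
    have hnhds : ∀ᶠ t in 𝓝 θ, t ∈ Θ := hΘ.mem_nhds hθ
    have hp x : DifferentiableAt ℝ (fun t => p t x) θ :=
      ((hsmooth x).differentiableOn one_ne_zero).differentiableAt hnhds
    simp only [smul_mulVec, dotProduct_smul, smul_eq_mul, ← mul_add]
    exact mul_le_mul_of_nonneg_left (two_mul_dotProduct_le_covMatrix_add_GeMat_add_Jmat hp
      (hpos θ hθ) (hnhds.mono hsum) (hnhds.mono hunb) lam a c) (hlampos θ hθ).le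
  have hV := integrable_dotProduct_mulVec
    (f := fun θ => lam θ • covMatrix (p θ) est) hint1 a a
  have hB := integrable_dotProduct_mulVec
    (f := fun θ => lam θ • (GeMat p θ + Jmat lam θ)) hint2 c c
  have hlam : IntegrableOn lam Θ := .of_integral_ne_zero (by rw [hlamint]; exact one_ne_zero)
  calc 2 * (a ⬝ᵥ c) = ∫ θ in Θ, lam θ * (2 * (a ⬝ᵥ c)) := by
        rw [integral_mul_const, hlamint, one_mul]
    _ ≤ ∫ θ in Θ, (a ⬝ᵥ (lam θ • covMatrix (p θ) est) *ᵥ a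
          + c ⬝ᵥ (lam θ • (GeMat p θ + Jmat lam θ)) *ᵥ c) :=
        setIntegral_mono_on (hlam.mul_const _) (hV.add hB) hΘ.measurableSet hpointwise
    _ = _ := by
        rw [integral_add hV hB,
          integral_dotProduct_mulVec (f := fun θ => lam θ • covMatrix (p θ) est) hint1,
          integral_dotProduct_mulVec (f := fun θ => lam θ • (GeMat p θ + Jmat lam θ)) hint2]
        rfl

/-- the Bayesian Cramér–Rao inequality. -/
theorem bayesian_cramer_rao {X : Type*} [Fintype X] {k : ℕ}
    (Θ : Set (Fin k → ℝ)) (hΘ : IsOpen Θ)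
    (p : (Fin k → ℝ) → X → ℝ)
    (hsmooth : ∀ x, ContDiffOn ℝ 1 (fun θ => p θ x) Θ)
    (hpos : ∀ θ ∈ Θ, ∀ x, 0 < p θ x)
    (hsum : ∀ θ ∈ Θ, ∑ x, p θ x = 1)
    (lam : (Fin k → ℝ) → ℝ) (hlams : ContDiffOn ℝ 1 lam Θ)
    (hlampos : ∀ θ ∈ Θ, 0 < lam θ)
    (hlamint : (∫ θ in Θ, lam θ) = 1)
    (est : X → Fin k → ℝ)
    (hunb : ∀ θ ∈ Θ, ∀ i, expct (p θ) (fun x => est x i) = θ i)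
    (hPD : ∀ θ ∈ Θ, (GeMat p θ + Jmat lam θ).PosDef)
    (hint1 : ∀ i j, IntegrableOn (fun θ => lam θ * covMatrix (p θ) est i j) Θ)
    (hint2 : ∀ i j, IntegrableOn (fun θ => lam θ * (GeMat p θ + Jmat lam θ) i j) Θ) :
    ((Matrix.of fun i j => ∫ θ in Θ, lam θ * covMatrix (p θ) est i j)
      - (Matrix.of fun i j =>
          ∫ θ in Θ, lam θ * (GeMat p θ + Jmat lam θ) i j)⁻¹).PosSemidef :=
  bayesian_cramer_rao_general Θ hΘ p hsmooth hpos hsum lam hlampos hlamint est hunb hint1 hint2
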